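/- arXiv:2010.09615 — 5 statements merged into one kernel-verified Lean document; each statement's English description precedes it below -/
import Mathlib

section
/- For every subgroup H of the torus T^s acting on V by scalar multiplication via the integer matrix Ξ, the fixed-point set V^H = {z ∈ V : θ • z = z for all θ ∈ H} is either empty or path-connected. (In other words, V is a T^s-connected space.) -/
/-- For every subgroup `H` of the torus `T^s` acting on the discriminantal variety `V` by scalar
multiplication, the fixed-point set `V^H` is either empty or path-connected, i.e. `V` is a
`T^s`-connected space. -/
theorem fixed_points_empty_or_pathConnected
    (m s : ℕ) (hm : 1 ≤ m) (Δ : MvPolynomial (Fin m) ℂ) (hΔ : Δ ≠ 0)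
    (Ξ : Fin s → Fin m → ℤ)
    (hΞ : ∀ i : Fin s, ∃ N : ℤ, ∀ p ∈ Δ.support, (∑ j, (p j : ℤ) * Ξ i j) = N)
    (H : Subgroup (Fin s → Circle)) :
    {z : Fin m → ℂ | MvPolynomial.eval z Δ ≠ 0 ∧
        ∀ θ ∈ H, (fun j => (∏ i, (θ i : ℂ) ^ (Ξ i j)) * z j) = z} = ∅ ∨
      IsPathConnected {z : Fin m → ℂ | MvPolynomial.eval z Δ ≠ 0 ∧
        ∀ θ ∈ H, (fun j => (∏ i, (θ i : ℂ) ^ (Ξ i j)) * z j) = z} := by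
  set S : Set (Fin m → ℂ) := {z : Fin m → ℂ | MvPolynomial.eval z Δ ≠ 0 ∧
      ∀ θ ∈ H, (fun j => (∏ i, (θ i : ℂ) ^ (Ξ i j)) * z j) = z} with hS
  rcases S.eq_empty_or_nonempty with h | ⟨a, ha⟩
  · exact Or.inl h
  right
  refine ⟨a, ha, ?_⟩
  intro b hb
  -- the complex line through a and b
  set f : ℂ → (Fin m → ℂ) := fun t j => a j + t * (b j - a j) with hf
  have hcont : Continuous f := by
    apply continuous_pi
    intro j
    fun_prop
  -- restrict Δ to the line: a one-variable polynomial
  set q : Polynomial ℂ :=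
    MvPolynomial.aeval (fun j => Polynomial.C (a j) + Polynomial.X * Polynomial.C (b j - a j)) Δ
    with hq
  have hf0 : f 0 = a := by funext j; simp [hf]
  have hf1 : f 1 = b := by funext j; simp [hf]
  have hqe : ∀ t : ℂ, q.eval t = MvPolynomial.eval (f t) Δ := by
    intro t
    have := MvPolynomial.comp_aeval_apply
      (f := fun j => Polynomial.C (a j) + Polynomial.X * Polynomial.C (b j - a j))
      (Polynomial.aeval t : Polynomial ℂ →ₐ[ℂ] ℂ) Δ
    simpa [hq, hf, Polynomial.coe_aeval_eq_eval, MvPolynomial.coe_aeval_eq_eval] using this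
  have hq0 : q.eval 0 = MvPolynomial.eval a Δ := by
    rw [hqe, hf0]
  have hq1 : q.eval 1 = MvPolynomial.eval b Δ := by
    rw [hqe, hf1]
  have hqne : q ≠ 0 := by
    intro h0
    apply ha.1
    rw [← hq0, h0, Polynomial.eval_zero]
  -- the set of roots is finite, hence countable
  have hroots : {t : ℂ | q.eval t = 0}.Countable := by
    have : {t : ℂ | q.eval t = 0} ⊆ ↑q.roots.toFinset := by
      intro t ht
      simp [Multiset.mem_toFinset, Polynomial.mem_roots, hqne, Polynomial.IsRoot,
        Set.mem_setOf_eq.mp ht]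
    exact Set.Countable.mono this (q.roots.toFinset : Finset ℂ).countable_toSet
  have hpc : IsPathConnected {t : ℂ | q.eval t = 0}ᶜ :=
    hroots.isPathConnected_compl_of_one_lt_rank
      (by rw [Complex.rank_real_complex]; norm_num)
  have h0mem : (0 : ℂ) ∈ {t : ℂ | q.eval t = 0}ᶜ := by
    simp only [Set.mem_compl_iff, Set.mem_setOf_eq, hq0]; exact ha.1
  have h1mem : (1 : ℂ) ∈ {t : ℂ | q.eval t = 0}ᶜ := by
    simp only [Set.mem_compl_iff, Set.mem_setOf_eq, hq1]; exact hb.1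
  have hjoin : JoinedIn {t : ℂ | q.eval t = 0}ᶜ 0 1 := hpc.joinedIn 0 h0mem 1 h1mem
  -- push the path through f
  obtain ⟨γ, hγ⟩ := hjoin
  refine ⟨(γ.map hcont).cast (by rw [hf0]) (by rw [hf1]), fun t => ?_⟩
  constructor
  · have := hγ t
    simp only [Set.mem_compl_iff, Set.mem_setOf_eq, hqe] at this
    simpa using this
  · intro θ hθ
    funext j
    have haθ : (∏ i, (θ i : ℂ) ^ (Ξ i j)) * a j = a j :=
      congrFun (ha.2 θ hθ) j
    have hbθ : (∏ i, (θ i : ℂ) ^ (Ξ i j)) * b j = b j :=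
      congrFun (hb.2 θ hθ) j
    show (∏ i, (θ i : ℂ) ^ (Ξ i j)) * (a j + γ t * (b j - a j)) = a j + γ t * (b j - a j)
    calc (∏ i, (θ i : ℂ) ^ (Ξ i j)) * (a j + γ t * (b j - a j))
        = (∏ i, (θ i : ℂ) ^ (Ξ i j)) * a j
          + γ t * ((∏ i, (θ i : ℂ) ^ (Ξ i j)) * b j - (∏ i, (θ i : ℂ) ^ (Ξ i j)) * a j) := by
          ring
      _ = a j + γ t * (b j - a j) := by rw [haθ, hbθ]
end

section
/- Let U ⊆ ℂ^m be open, let η : U → ℂ be holomorphic and nowhere vanishing on U, and define h : U → ℝ by h(z) = |η(z)|². Then for every point p ∈ U, the negativity index of the Euclidean Hessian of h at p is at most m; that is, every real linear subspace W ⊆ ℂ^m on which the quadratic form v ↦ D²h(p)(v, v) (the second real Fréchet derivative of h at p evaluated twice on v) is negative definite satisfies dim_ℝ W ≤ m. -/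
/-!
Restricted to a complex line `w ↦ p + w • v`, the function `|η|²` becomes `|g|²` with `g`
holomorphic in one variable, and the sum of its second derivatives along the real and the
imaginary axis is its Laplacian `4 |g'(0)|² ≥ 0`. Hence `Q v + Q (I • v) ≥ 0` for the Hessian
form `Q` of `|η|²` at `p`, so a real subspace `W` on which `Q` is negative definite meets `I • W`
only in `0`, and `2 dim_ℝ W ≤ dim_ℝ ℂ^m = 2m`.
-/

open Complex Filter Topology Module
open scoped Pointwise

section ComplexStructure

variable {V : Type*} [AddCommGroup V] [Module ℂ V] [Module ℝ V] [IsScalarTower ℝ ℂ V]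

theorem Submodule.finrank_I_smul (W : Submodule ℝ V) : finrank ℝ ↥(I • W) = finrank ℝ W :=
  ((LinearEquiv.smulOfNeZero ℂ V I I_ne_zero).restrictScalars ℝ).finrank_map_eq W

theorem Submodule.finrank_le_finrank_complex_of_disjoint_I_smul [FiniteDimensional ℂ V]
    {W : Submodule ℝ V} (hW : Disjoint W (I • W)) : finrank ℝ W ≤ finrank ℂ V := by
  have : FiniteDimensional ℝ V := .trans ℝ ℂ V
  have hsum := Submodule.finrank_sup_add_finrank_inf_eq W (I • W)
  have hle := Submodule.finrank_le (W ⊔ I • W)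
  rw [hW.eq_bot, finrank_bot, W.finrank_I_smul, ← finrank_mul_finrank ℝ ℂ V,
    finrank_real_complex] at *
  omega

theorem Submodule.disjoint_I_smul_of_neg {Q : V → ℝ} (hQ : ∀ v, 0 ≤ Q v + Q (I • v))
    {W : Submodule ℝ V} (hW : ∀ v ∈ W, v ≠ 0 → Q v < 0) : Disjoint W (I • W) := by
  rw [Submodule.disjoint_def]
  intro x hx hIx
  obtain ⟨w, hw, rfl⟩ := (Submodule.mem_smul_pointwise_iff_exists x I W).1 hIx
  by_contra hne
  have hw0 : w ≠ 0 := by rintro rfl; simp at hne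
  linarith [hQ w, hW w hw hw0, hW _ hx hne]

end ComplexStructure

theorem hasDerivAt_deriv_comp_add_smul {E F : Type*} [NormedAddCommGroup E] [NormedSpace ℝ E]
    [NormedAddCommGroup F] [NormedSpace ℝ F] {f : E → F} {p : E}
    (hf : ∀ᶠ z in 𝓝 p, DifferentiableAt ℝ f z) (hf' : DifferentiableAt ℝ (fderiv ℝ f) p)
    (v : E) :
    HasDerivAt (deriv fun t : ℝ => f (p + t • v)) (fderiv ℝ (fderiv ℝ f) p v v) 0 := by
  have hline : ∀ t : ℝ, HasDerivAt (fun t : ℝ => p + t • v) v t := fun t => by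
    simpa using ((hasDerivAt_id t).smul_const v).const_add p
  have hcont : Tendsto (fun t : ℝ => p + t • v) (𝓝 0) (𝓝 p) := by
    simpa using (hline 0).continuousAt.tendsto
  have hderiv : (deriv fun t : ℝ => f (p + t • v)) =ᶠ[𝓝 0] fun t => fderiv ℝ f (p + t • v) v := by
    filter_upwards [hcont.eventually hf] with t ht
    exact (ht.hasFDerivAt.comp_hasDerivAt t (hline t)).deriv
  refine HasDerivAt.congr_of_eventuallyEq ?_ hderiv
  have hf'' : HasFDerivAt (fderiv ℝ f) (fderiv ℝ (fderiv ℝ f) p) (p + (0 : ℝ) • v) := by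
    simpa using hf'.hasFDerivAt
  exact (ContinuousLinearMap.apply ℝ F v).hasFDerivAt.comp_hasDerivAt 0
    (hf''.comp_hasDerivAt 0 (hline 0))

theorem hasDerivAt_deriv_norm_sq_comp_mul {g : ℂ → ℂ} (hg : AnalyticAt ℂ g 0) (u : ℂ) :
    HasDerivAt (deriv fun t : ℝ => ‖g (t * u)‖ ^ 2)
      (2 * (‖deriv g 0 * u‖ ^ 2 + inner ℝ (g 0) (deriv (deriv g) 0 * u ^ 2))) 0 := by
  have hG : ∀ᶠ t : ℝ in 𝓝 0, HasDerivAt (fun t : ℝ => g (t * u)) (deriv g (t * u) * u) t := by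
    have : Tendsto (fun t : ℝ => (t : ℂ) * u) (𝓝 0) (𝓝 0) :=
      (continuous_ofReal.mul continuous_const).tendsto' (0 : ℝ) (0 : ℂ) (by simp)
    filter_upwards [this.eventually hg.eventually_analyticAt] with t ht
    exact (ht.differentiableAt.hasDerivAt.comp (t : ℂ) (hasDerivAt_mul_const u)).comp_ofReal
  have hderiv : (deriv fun t : ℝ => ‖g (t * u)‖ ^ 2) =ᶠ[𝓝 0]
      fun t => 2 * inner ℝ (g (t * u)) (deriv g (t * u) * u) := by
    filter_upwards [hG] with t ht
    exact ht.norm_sq.deriv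
  refine HasDerivAt.congr_of_eventuallyEq ?_ hderiv
  have h1 : HasDerivAt (fun t : ℝ => g (t * u)) (deriv g 0 * u) 0 := by simpa using hG.self_of_nhds
  have h2 : HasDerivAt (fun t : ℝ => deriv g (t * u) * u) (deriv (deriv g) 0 * u ^ 2) 0 := by
    have hg' : HasDerivAt (deriv g) (deriv (deriv g) 0) ((0 : ℝ) * u : ℂ) := by
      simpa using hg.deriv.differentiableAt.hasDerivAt
    simpa [sq, mul_assoc] using
      ((hg'.comp ((0 : ℝ) : ℂ) (hasDerivAt_mul_const u)).comp_ofReal).mul_const u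
  refine ((h1.inner ℝ h2).const_mul 2).congr_deriv ?_
  simp only [ofReal_zero, zero_mul, real_inner_self_eq_norm_sq]
  ring

section Holomorphic

variable {E : Type*} [NormedAddCommGroup E] [NormedSpace ℂ E]

def restrictToLine (η : E → ℂ) (p v : E) (w : ℂ) : ℂ := η (p + w • v)

theorem analyticAt_restrictToLine {η : E → ℂ} {p : E}
    (hη : ∀ᶠ z in 𝓝 p, DifferentiableAt ℂ η z) (v : E) : AnalyticAt ℂ (restrictToLine η p v) 0 := by
  have hline : Differentiable ℂ fun w : ℂ => p + w • v :=
    (differentiable_id.smul_const v).const_add p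
  have hcont : Tendsto (fun w : ℂ => p + w • v) (𝓝 0) (𝓝 p) := by
    simpa using (hline 0).continuousAt.tendsto
  rw [analyticAt_iff_eventually_differentiableAt]
  filter_upwards [hcont.eventually hη] with w hw
  exact hw.comp w (hline w)

theorem fderiv_fderiv_norm_sq_smul_apply {η : E → ℂ} {p : E}
    (hη : ∀ᶠ z in 𝓝 p, DifferentiableAt ℂ η z)
    (hh : DifferentiableAt ℝ (fderiv ℝ fun z => ‖η z‖ ^ 2) p) (v : E) (u : ℂ) :
    fderiv ℝ (fderiv ℝ fun z => ‖η z‖ ^ 2) p (u • v) (u • v) =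
      2 * (‖deriv (restrictToLine η p v) 0 * u‖ ^ 2 +
        inner ℝ (restrictToLine η p v 0) (deriv (deriv (restrictToLine η p v)) 0 * u ^ 2)) := by
  have hdiff : ∀ᶠ z in 𝓝 p, DifferentiableAt ℝ (fun z => ‖η z‖ ^ 2) z := by
    filter_upwards [hη] with z hz
    exact (hz.restrictScalars ℝ).norm_sq ℝ
  have hline : (fun t : ℝ => ‖η (p + t • u • v)‖ ^ 2) =
      fun t : ℝ => ‖restrictToLine η p v (t * u)‖ ^ 2 := by
    ext t
    rw [restrictToLine, mul_smul, coe_smul]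
  refine (hasDerivAt_deriv_comp_add_smul hdiff hh (u • v)).unique ?_
  rw [hline]
  exact hasDerivAt_deriv_norm_sq_comp_mul (analyticAt_restrictToLine hη v) u

theorem fderiv_fderiv_norm_sq_add_I_smul_nonneg {η : E → ℂ} {p : E}
    (hη : ∀ᶠ z in 𝓝 p, DifferentiableAt ℂ η z) (v : E) :
    0 ≤ fderiv ℝ (fderiv ℝ fun z => ‖η z‖ ^ 2) p v v +
      fderiv ℝ (fderiv ℝ fun z => ‖η z‖ ^ 2) p (I • v) (I • v) := by
  by_cases hh : DifferentiableAt ℝ (fderiv ℝ fun z => ‖η z‖ ^ 2) p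
  · have hv := fderiv_fderiv_norm_sq_smul_apply hη hh v 1
    rw [one_smul] at hv
    rw [hv, fderiv_fderiv_norm_sq_smul_apply hη hh v I]
    simp only [mul_one, one_pow, norm_mul, norm_I, I_sq, mul_neg, inner_neg_right]
    ring_nf
    positivity
  · -- `fderiv` returns the junk value `0` at points of non-differentiability.
    simp [fderiv_zero_of_not_differentiableAt hh]

end Holomorphic

theorem hessian_negativity_index_le_general
    (m : ℕ) (U : Set (Fin m → ℂ)) (hU : IsOpen U)
    (η : (Fin m → ℂ) → ℂ) (hη : DifferentiableOn ℂ η U)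
    (h : (Fin m → ℂ) → ℝ) (hh : ∀ z, h z = ‖η z‖ ^ 2)
    (p : Fin m → ℂ) (hp : p ∈ U)
    (W : Submodule ℝ (Fin m → ℂ))
    (hW : ∀ v ∈ W, v ≠ 0 → (fderiv ℝ (fderiv ℝ h) p v) v < 0) :
    Module.finrank ℝ W ≤ m := by
  obtain rfl : h = fun z => ‖η z‖ ^ 2 := funext hh
  have hηp : ∀ᶠ z in 𝓝 p, DifferentiableAt ℂ η z :=
    eventually_of_mem (hU.mem_nhds hp) fun z hz => hη.differentiableAt (hU.mem_nhds hz)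
  have hdisj := Submodule.disjoint_I_smul_of_neg
    (fderiv_fderiv_norm_sq_add_I_smul_nonneg hηp) hW
  simpa using Submodule.finrank_le_finrank_complex_of_disjoint_I_smul hdisj

/-- If `η` is a nowhere-vanishing holomorphic function on an open set `U ⊆ ℂ^m` and
`h(z) = |η(z)|²`, then at every `p ∈ U` the negativity index of the Euclidean Hessian of `h`
is at most `m`: every real subspace on which the quadratic form `v ↦ D²h(p)(v, v)` is negative
definite has real dimension at most `m`. -/
theorem hessian_negativity_index_le
    (m : ℕ) (U : Set (Fin m → ℂ)) (hU : IsOpen U)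
    (η : (Fin m → ℂ) → ℂ) (hη : DifferentiableOn ℂ η U)
    (hη0 : ∀ z ∈ U, η z ≠ 0)
    (h : (Fin m → ℂ) → ℝ) (hh : ∀ z, h z = ‖η z‖ ^ 2)
    (p : Fin m → ℂ) (hp : p ∈ U)
    (W : Submodule ℝ (Fin m → ℂ))
    (hW : ∀ v ∈ W, v ≠ 0 → (fderiv ℝ (fderiv ℝ h) p v) v < 0) :
    Module.finrank ℝ W ≤ m :=
  hessian_negativity_index_le_general m U hU η hη h hh p hp W hW
end

section
/- For every point p ∈ V, the positivity index of the Euclidean Hessian of g at p is at least m: there exists a real linear subspace W ⊆ ℂ^m with dim_ℝ W ≥ m such that the quadratic form v ↦ D²g(p)(v, v) (the second real Fréchet derivative of g at p evaluated twice on v) is positive definite on W. -/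
/-!
If `f = ∑ᵢ |uᵢ|²` with `uᵢ` holomorphic, its real Hessian satisfies
`D²f(p)(v, v) + D²f(p)(iv, iv) = 4 ∑ᵢ |duᵢ(p) v|²`. Near `p`, `g = ∑ⱼ |zⱼ|² + |1/Δ|²` has this
form, and the coordinate terms alone make the right-hand side positive for `v ≠ 0`. Hence a
subspace `N` on which `D²g(p)` is negative semidefinite meets `iN` only in `0`, so
`dim_ℝ N ≤ m`, and by Sylvester's law of inertia `D²g(p)` is positive definite on a subspace of
dimension at least `2m - m = m`.
-/

open Complex ContinuousLinearMap Filter Topology Module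

namespace QuadraticForm

variable {𝕜 M : Type*} [Field 𝕜] [LinearOrder 𝕜] [IsStrictOrderedRing 𝕜] [AddCommGroup M]
  [Module 𝕜 M] [FiniteDimensional 𝕜 M]

theorem exists_nonpos_sigPos_add_finrank_eq (Q : QuadraticForm 𝕜 M) :
    ∃ N : Submodule 𝕜 M, (∀ x ∈ N, Q x ≤ 0) ∧ sigPos Q + finrank 𝕜 N = finrank 𝕜 M := by
  obtain ⟨V, hV, hVneg⟩ := exists_finrank_eq_sigNeg_and_negDef Q
  have hVnonpos : ∀ x ∈ V, Q x ≤ 0 := fun x hx => by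
    simpa using hVneg.nonneg ⟨x, hx⟩
  refine ⟨V ⊔ Q.radical, ?_, ?_⟩
  · intro x hx
    obtain ⟨a, ha, r, hr, rfl⟩ := Submodule.mem_sup.1 hx
    rw [add_comm, (QuadraticMap.mem_radical_iff'.1 hr).2]
    exact hVnonpos a ha
  · have hdisj : V ⊓ Q.radical = ⊥ := by
      rw [Submodule.eq_bot_iff]
      rintro x ⟨hxV, hxR⟩
      by_contra hx
      have := hVneg ⟨x, hxV⟩ (by simpa using hx)
      simp [(QuadraticMap.mem_radical_iff'.1 hxR).1] at this
    have hsup := Submodule.finrank_sup_add_finrank_inf_eq V Q.radical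
    rw [hdisj, finrank_bot] at hsup
    have := Q.sigPos_add_sigNeg_add_radical
    omega

theorem finrank_le_two_mul_sigPos (Q : QuadraticForm 𝕜 M) (J : M ≃ₗ[𝕜] M)
    (hQJ : ∀ x, x ≠ 0 → 0 < Q x + Q (J x)) : finrank 𝕜 M ≤ 2 * sigPos Q := by
  obtain ⟨N, hN, hdim⟩ := Q.exists_nonpos_sigPos_add_finrank_eq
  have hdisj : Disjoint N (N.map (J : M →ₗ[𝕜] M)) := by
    rw [Submodule.disjoint_def]
    rintro _ hJy ⟨y, hy, rfl⟩
    rw [LinearEquiv.coe_coe] at hJy ⊢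
    by_contra hy0
    have := hQJ y (by rintro rfl; simp at hy0)
    linarith [hN y hy, hN _ hJy]
  have := Submodule.finrank_add_finrank_le_of_disjoint hdisj
  rw [LinearEquiv.finrank_map_eq] at this
  omega

end QuadraticForm

section NormSqOfHolomorphic

variable {E : Type*} [NormedAddCommGroup E] [NormedSpace ℂ E] {p : E}

theorem AnalyticAt.exists_hasFDerivAt_fderiv_norm_sq {u : E → ℂ} (hu : AnalyticAt ℂ u p) :
    ∃ B : E →L[ℝ] E →L[ℝ] ℝ, HasFDerivAt (fderiv ℝ fun z => ‖u z‖ ^ 2) B p ∧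
      ∀ v, B v v + B (I • v) (I • v) = 4 * ‖fderiv ℂ u p v‖ ^ 2 := by
  have hfderiv : (fderiv ℝ fun z => ‖u z‖ ^ 2) =ᶠ[𝓝 p]
      fun z => 2 • (innerSL ℝ (u z)).comp ((fderiv ℂ u z).restrictScalars ℝ) := by
    filter_upwards [hu.eventually_analyticAt] with z hz
    exact (hz.differentiableAt.hasFDerivAt.restrictScalars ℝ).norm_sq.fderiv
  have hinner := (innerSL ℝ (E := ℂ)).hasFDerivAt.comp p
    (hu.differentiableAt.hasFDerivAt.restrictScalars ℝ)
  have hderiv := (restrictScalarsL ℂ E ℂ ℝ ℝ).hasFDerivAt.comp p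
    (hu.fderiv.differentiableAt.hasFDerivAt.restrictScalars ℝ)
  refine ⟨_, ((hinner.clm_comp hderiv).const_smul 2).congr_of_eventuallyEq hfderiv, fun v => ?_⟩
  simp only [add_apply, smul_apply, comp_apply, coe_restrictScalars', coe_restrict_scalarsL',
    compL_apply, flip_apply, map_smul, restrictScalars_smul, smul_eq_mul, nsmul_eq_mul,
    Nat.cast_ofNat, Function.comp_apply]
  -- the second-order terms cancel: `D²u(p)(iv, iv) = -D²u(p)(v, v)` by `ℂ`-bilinearity
  rw [← mul_assoc, I_mul_I, neg_one_mul]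
  repeat rw [innerSL_apply_apply]
  simp only [inner_neg_right, real_inner_self_eq_norm_sq, norm_mul, norm_I, one_mul]
  ring

theorem fderiv_fderiv_sum_norm_sq_add_I_smul {ι : Type*} [Fintype ι] {u : ι → E → ℂ}
    (hu : ∀ i, AnalyticAt ℂ (u i) p) (v : E) :
    fderiv ℝ (fderiv ℝ fun z => ∑ i, ‖u i z‖ ^ 2) p v v +
        fderiv ℝ (fderiv ℝ fun z => ∑ i, ‖u i z‖ ^ 2) p (I • v) (I • v) =
      4 * ∑ i, ‖fderiv ℂ (u i) p v‖ ^ 2 := by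
  choose B hB hBI using fun i => (hu i).exists_hasFDerivAt_fderiv_norm_sq
  have hfderiv : (fderiv ℝ fun z => ∑ i, ‖u i z‖ ^ 2) =ᶠ[𝓝 p]
      fun z => ∑ i, fderiv ℝ (fun z => ‖u i z‖ ^ 2) z := by
    filter_upwards [eventually_all.2 fun i => (hu i).eventually_analyticAt] with z hz
    exact fderiv_fun_sum fun i _ =>
      ((hz i).differentiableAt.hasFDerivAt.restrictScalars ℝ).norm_sq.differentiableAt
  rw [((HasFDerivAt.fun_sum fun i _ => hB i).congr_of_eventuallyEq hfderiv).fderiv]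
  simp only [sum_apply, ← Finset.sum_add_distrib, hBI, Finset.mul_sum]

end NormSqOfHolomorphic

theorem fderiv_fderiv_sum_norm_sq_add_norm_sq_add_I_smul_pos {m : ℕ} {w : (Fin m → ℂ) → ℂ}
    {p : Fin m → ℂ} (hw : AnalyticAt ℂ w p) {v : Fin m → ℂ} (hv : v ≠ 0) :
    0 < fderiv ℝ (fderiv ℝ fun z => ∑ j, ‖z j‖ ^ 2 + ‖w z‖ ^ 2) p v v +
      fderiv ℝ (fderiv ℝ fun z => ∑ j, ‖z j‖ ^ 2 + ‖w z‖ ^ 2) p (I • v) (I • v) := by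
  let u : Option (Fin m) → (Fin m → ℂ) → ℂ := fun i z => i.elim (w z) (z ·)
  have hf : (fun z => ∑ j, ‖z j‖ ^ 2 + ‖w z‖ ^ 2) = fun z => ∑ i, ‖u i z‖ ^ 2 := by
    simp [u, Fintype.sum_option, add_comm]
  have hu : ∀ i, AnalyticAt ℂ (u i) p
    | none => hw
    | some j => (proj (R := ℂ) (φ := fun _ : Fin m => ℂ) j).analyticAt p
  have hcoord (j : Fin m) : fderiv ℂ (u (some j)) p v = v j := by
    change fderiv ℂ (fun z : Fin m → ℂ => z j) p v = v j
    rw [(hasFDerivAt_apply j p).fderiv, proj_apply]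
  obtain ⟨j, hj⟩ := Function.ne_iff.1 hv
  have hsum : 0 < ∑ j, ‖v j‖ ^ 2 :=
    Finset.sum_pos' (fun _ _ => by positivity) ⟨j, Finset.mem_univ j, by positivity⟩
  rw [hf, fderiv_fderiv_sum_norm_sq_add_I_smul hu, Fintype.sum_option]
  simp only [hcoord]
  positivity

theorem hessian_g_positivity_index_ge_general
    (m : ℕ) (Δ : MvPolynomial (Fin m) ℂ)
    (g : (Fin m → ℂ) → ℝ)
    (hg : ∀ z, g z = (∑ j, ‖z j‖ ^ 2) + 1 / ‖MvPolynomial.eval z Δ‖ ^ 2)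
    (p : Fin m → ℂ) (hp : MvPolynomial.eval p Δ ≠ 0) :
    ∃ W : Submodule ℝ (Fin m → ℂ), m ≤ Module.finrank ℝ W ∧
      ∀ v ∈ W, v ≠ 0 → 0 < (fderiv ℝ (fderiv ℝ g) p v) v := by
  have hg' : g = fun z => ∑ j, ‖z j‖ ^ 2 + ‖(MvPolynomial.eval z Δ)⁻¹‖ ^ 2 := by
    funext z
    simp [hg]
  have hw : AnalyticAt ℂ (fun z => (MvPolynomial.eval z Δ)⁻¹) p :=
    (AnalyticOnNhd.eval_mvPolynomial Δ p trivial).inv hp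
  let Q : QuadraticForm ℝ (Fin m → ℂ) :=
    LinearMap.BilinMap.toQuadraticMap (fderiv ℝ (fderiv ℝ g) p).toLinearMap₁₂
  have hQI (v : Fin m → ℂ) (hv : v ≠ 0) : 0 < Q v + Q (I • v) := by
    simpa [Q, hg'] using fderiv_fderiv_sum_norm_sq_add_norm_sq_add_I_smul_pos hw hv
  obtain ⟨W, hW, hWpos⟩ := exists_finrank_eq_sigPos_and_posDef Q
  have hdim := QuadraticForm.finrank_le_two_mul_sigPos Q
    ((LinearEquiv.smulOfNeZero ℂ _ I I_ne_zero).restrictScalars ℝ) hQI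
  rw [finrank_real_of_complex, finrank_fin_fun] at hdim
  exact ⟨W, by omega, fun v hv hv0 => hWpos ⟨v, hv⟩ (by simpa using hv0)⟩

/-- For every point `p` of the discriminantal variety `V`, the positivity index of the Euclidean
Hessian of `g(z) = |z_1|² + … + |z_m|² + 1/|Δ(z)|²` at `p` is at least `m`: there is a real
subspace of dimension at least `m` on which the quadratic form `v ↦ D²g(p)(v, v)` is positive
definite. -/
theorem hessian_g_positivity_index_ge
    (m : ℕ) (hm : 1 ≤ m) (Δ : MvPolynomial (Fin m) ℂ) (hΔ : Δ ≠ 0)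
    (g : (Fin m → ℂ) → ℝ)
    (hg : ∀ z, g z = (∑ j, ‖z j‖ ^ 2) + 1 / ‖MvPolynomial.eval z Δ‖ ^ 2)
    (p : Fin m → ℂ) (hp : MvPolynomial.eval p Δ ≠ 0) :
    ∃ W : Submodule ℝ (Fin m → ℂ), m ≤ Module.finrank ℝ W ∧
      ∀ v ∈ W, v ≠ 0 → 0 < (fderiv ℝ (fderiv ℝ g) p v) v :=
  hessian_g_positivity_index_ge_general m Δ g hg p hp
end

section
/- Define f̃ : V × V → ℝ by f̃(p, p′) = g(p) + g(p′). Then for every point (p, p′) ∈ V × V, the positivity index of the Euclidean Hessian of f̃ at (p, p′) is at least 2m: there exists a real linear subspace W ⊆ ℂ^m × ℂ^m with dim_ℝ W ≥ 2m on which the quadratic form (v, v′) ↦ D²f̃(p, p′)((v, v′), (v, v′)) is positive definite. -/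
/-!
Both summands of `f̃` are sums of squared moduli of holomorphic functions: the coordinates and
`1 / Δ`. For `F = ‖φ‖²` with `φ` holomorphic, restricting to the complex line `ζ ↦ a + ζ • v`
gives `D²F(v, v) + D²F(I • v, I • v) = 4 ‖Dφ v‖²`, so the Hessian `H` of `f̃` satisfies
`H(w, w) + H(I • w, I • w) ≥ 4 ∑ⱼ (|vⱼ|² + |v'ⱼ|²)` for `w = (v, v')`, the bound coming from the
coordinates alone.

This forces `H` to be positive definite on half of the `4m` real dimensions: if `W` is a maximal
positive definite subspace, `H` is negative semidefinite on its `H`-orthogonal `N`, which has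
dimension at least `4m - dim W`; multiplication by `I` carries `N` onto a positive definite
subspace, which meets `N` trivially, so `2 dim N ≤ 4m`.
-/

open Module

namespace LinearMap.BilinForm

variable {K V : Type*} [Field K] [LinearOrder K] [AddCommGroup V] [Module K V]
  {B : LinearMap.BilinForm K V}

def IsPosDefOn (B : LinearMap.BilinForm K V) (W : Submodule K V) : Prop :=
  ∀ v ∈ W, v ≠ 0 → 0 < B v v

theorem IsPosDefOn.disjoint {U N : Submodule K V} (hU : B.IsPosDefOn U)
    (hN : ∀ v ∈ N, B v v ≤ 0) : Disjoint U N := by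
  rw [Submodule.disjoint_def]
  intro v hvU hvN
  by_contra hv
  exact (hU v hvU hv).not_ge (hN v hvN)

variable [IsStrictOrderedRing K]

theorem IsPosDefOn.sup_span_singleton (hB : B.IsSymm) {W : Submodule K V}
    (hW : B.IsPosDefOn W) {x : V} (hxW : ∀ w ∈ W, B w x = 0) (hx : 0 < B x x) :
    B.IsPosDefOn (W ⊔ K ∙ x) := by
  intro v hv hv0
  obtain ⟨w, hw, y, hy, rfl⟩ := Submodule.mem_sup.1 hv
  obtain ⟨c, rfl⟩ := Submodule.mem_span_singleton.1 hy
  have hwx := hxW w hw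
  have hxw : B x w = 0 := (hB.eq x w).trans hwx
  have expand : B (w + c • x) (w + c • x) = B w w + c ^ 2 * B x x := by
    simp only [map_add, map_smul, LinearMap.add_apply, LinearMap.smul_apply, smul_eq_mul,
      hwx, hxw]
    ring
  rw [expand]
  rcases eq_or_ne w 0 with rfl | hw0
  · have hc : c ≠ 0 := by rintro rfl; simp at hv0
    simpa using mul_pos (by positivity) hx
  · exact add_pos_of_pos_of_nonneg (hW w hw hw0) (by positivity)

theorem nonpos_of_mem_orthogonal_of_maximal (hB : B.IsSymm) {W : Submodule K V}
    (hW : Maximal B.IsPosDefOn W) {x : V} (hx : x ∈ B.orthogonal W) : B x x ≤ 0 := by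
  by_contra! hxx
  have hxW : x ∉ W := fun h => hxx.ne' (hx x h)
  have hlt : W < W ⊔ K ∙ x :=
    left_lt_sup.2 fun h => hxW (h (Submodule.mem_span_singleton_self x))
  exact hlt.not_ge (hW.2 (hW.1.sup_span_singleton hB hx hxx) hlt.le)

variable [FiniteDimensional K V]

theorem exists_isPosDefOn_finrank_le_two_mul (hB : B.IsSymm) (J : V ≃ₗ[K] V)
    (hJ : ∀ x ≠ 0, 0 < B x x + B (J x) (J x)) :
    ∃ W, B.IsPosDefOn W ∧ finrank K V ≤ 2 * finrank K W := by
  obtain ⟨W, hW⟩ : ∃ W, Maximal B.IsPosDefOn W := by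
    obtain ⟨W, hW, hmax⟩ := set_has_maximal_iff_noetherian.2 inferInstance
      {W | B.IsPosDefOn W} ⟨⊥, fun v hv hv0 => (hv0 ((Submodule.mem_bot K).1 hv)).elim⟩
    exact ⟨W, hW, fun U hU hle => not_lt_iff_le_imp_ge.1 (hmax U hU) hle⟩
  have h₁ := B.finrank_add_finrank_orthogonal' W
  set N := B.orthogonal W
  have hN : ∀ v ∈ N, B v v ≤ 0 := fun _ hv => nonpos_of_mem_orthogonal_of_maximal hB hW hv
  have hJN : B.IsPosDefOn (N.map (J : V →ₗ[K] V)) := by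
    rintro _ ⟨x, hx, rfl⟩ hx0
    have hsum := hJ x (by rintro rfl; simp at hx0)
    have hnonpos := hN x hx
    simp only [LinearEquiv.coe_coe]
    linarith
  have h₂ := Submodule.finrank_sup_add_finrank_inf_eq (N.map (J : V →ₗ[K] V)) N
  rw [(hJN.disjoint hN).eq_bot, finrank_bot, LinearEquiv.finrank_map_eq] at h₂
  have h₃ := Submodule.finrank_le (N.map (J : V →ₗ[K] V) ⊔ N)
  exact ⟨W, hW.1, by omega⟩

end LinearMap.BilinForm

open Complex Filter Topology

section SecondDerivative

variable {E G : Type*} [NormedAddCommGroup E] [NormedSpace ℝ E]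
  [NormedAddCommGroup G] [NormedSpace ℝ G]

theorem ContDiffAt.eventually_differentiableAt {F : E → G} {a : E} (hF : ContDiffAt ℝ 2 F a) :
    ∀ᶠ x in 𝓝 a, DifferentiableAt ℝ F x :=
  (hF.eventually (by simp)).mono fun _ hx => hx.differentiableAt (by simp)

theorem ContDiffAt.hasFDerivAt_fderiv {F : E → G} {a : E} (hF : ContDiffAt ℝ 2 F a) :
    HasFDerivAt (fderiv ℝ F) (fderiv ℝ (fderiv ℝ F) a) a :=
  ((hF.fderiv_right (m := 1) (by norm_num)).differentiableAt (by simp)).hasFDerivAt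

theorem fderiv_fderiv_apply_eq_deriv_deriv {F : E → G} {a : E} (hF : ContDiffAt ℝ 2 F a)
    (v : E) : fderiv ℝ (fderiv ℝ F) a v v = deriv (deriv fun t : ℝ => F (a + t • v)) 0 := by
  have hline (t : ℝ) : HasDerivAt (fun s : ℝ => a + s • v) v t := by
    simpa using ((hasDerivAt_id t).smul_const v).const_add a
  have htend : Tendsto (fun t : ℝ => a + t • v) (𝓝 0) (𝓝 a) := by
    simpa using (hline 0).continuousAt.tendsto
  have hderiv : deriv (fun t : ℝ => F (a + t • v)) =ᶠ[𝓝 0] fun t => fderiv ℝ F (a + t • v) v :=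
    (htend.eventually hF.eventually_differentiableAt).mono fun t ht =>
      (ht.hasFDerivAt.comp_hasDerivAt t (hline t)).deriv
  rw [hderiv.deriv_eq]
  have hF' : HasFDerivAt (fderiv ℝ F) (fderiv ℝ (fderiv ℝ F) a) (a + (0 : ℝ) • v) := by
    simpa using hF.hasFDerivAt_fderiv
  exact (((ContinuousLinearMap.apply ℝ G v).hasFDerivAt.comp_hasDerivAt 0
    (hF'.comp_hasDerivAt 0 (hline 0))).deriv).symm

theorem fderiv_fderiv_sum {ι : Type*} (s : Finset ι) {F : ι → E → G} {a : E}
    (hF : ∀ i ∈ s, ContDiffAt ℝ 2 (F i) a) :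
    fderiv ℝ (fderiv ℝ fun x => ∑ i ∈ s, F i x) a = ∑ i ∈ s, fderiv ℝ (fderiv ℝ (F i)) a := by
  have hderiv : fderiv ℝ (fun x => ∑ i ∈ s, F i x) =ᶠ[𝓝 a] fun x => ∑ i ∈ s, fderiv ℝ (F i) x :=
    ((eventually_all_finset s).2 fun i hi => (hF i hi).eventually_differentiableAt).mono
      fun _ hx => fderiv_fun_sum hx
  rw [hderiv.fderiv_eq]
  exact fderiv_fun_sum fun i hi => (hF i hi).hasFDerivAt_fderiv.differentiableAt

end SecondDerivative

theorem deriv_deriv_norm_sq {F : Type*} [NormedAddCommGroup F] [InnerProductSpace ℝ F]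
    {u u' : ℝ → F} {u'' : F} {t₀ : ℝ} (hu : ∀ᶠ t in 𝓝 t₀, HasDerivAt u (u' t) t)
    (hu' : HasDerivAt u' u'' t₀) :
    deriv (deriv fun t => ‖u t‖ ^ 2) t₀ = 2 * (‖u' t₀‖ ^ 2 + inner ℝ (u t₀) u'') := by
  have hderiv : deriv (fun t => ‖u t‖ ^ 2) =ᶠ[𝓝 t₀] fun t => 2 * inner ℝ (u t) (u' t) :=
    hu.mono fun t ht => ht.norm_sq.deriv
  rw [hderiv.deriv_eq, ((hu.self_of_nhds.inner ℝ hu').const_mul 2).deriv,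
    real_inner_self_eq_norm_sq]
  ring

theorem hasDerivAt_comp_ofReal_mul {g : ℂ → ℂ} {ε : ℂ} {t : ℝ}
    (hg : DifferentiableAt ℂ g (t * ε)) :
    HasDerivAt (fun s : ℝ => g (s * ε)) (deriv g (t * ε) * ε) t :=
  (hg.hasDerivAt.comp (t : ℂ) (hasDerivAt_mul_const ε)).comp_ofReal

theorem deriv_deriv_norm_sq_comp_ofReal_mul {g : ℂ → ℂ} (hg : AnalyticAt ℂ g 0) (ε : ℂ) :
    deriv (deriv fun t : ℝ => ‖g (t * ε)‖ ^ 2) 0 =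
      2 * (‖deriv g 0 * ε‖ ^ 2 + inner ℝ (g 0) (deriv (deriv g) 0 * ε * ε)) := by
  have htend : Tendsto (fun t : ℝ => (t : ℂ) * ε) (𝓝 0) (𝓝 0) := by
    have hcont : Continuous fun t : ℝ => (t : ℂ) * ε := by fun_prop
    exact hcont.tendsto' 0 0 (by simp)
  have hev : ∀ᶠ t : ℝ in 𝓝 0, DifferentiableAt ℂ g (t * ε) :=
    htend.eventually (hg.eventually_analyticAt.mono fun _ hz => hz.differentiableAt)
  have hg'' : DifferentiableAt ℂ (deriv g) ((0 : ℝ) * ε) := by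
    simpa using hg.deriv.differentiableAt
  simpa using deriv_deriv_norm_sq (hev.mono fun _ ht => hasDerivAt_comp_ofReal_mul ht)
    ((hasDerivAt_comp_ofReal_mul hg'').mul_const ε)

section Holomorphic

variable {E : Type*} [NormedAddCommGroup E] [NormedSpace ℂ E]

theorem AnalyticAt.contDiffAt_norm_sq {φ : E → ℂ} {a : E} (hφ : AnalyticAt ℂ φ a)
    {n : WithTop ℕ∞} : ContDiffAt ℝ n (fun x => ‖φ x‖ ^ 2) a :=
  (hφ.restrictScalars (𝕜 := ℝ)).contDiffAt.norm_sq ℝ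

theorem fderiv_fderiv_norm_sq_add_apply_I_smul {φ : E → ℂ} {a : E} (hφ : AnalyticAt ℂ φ a)
    (v : E) :
    fderiv ℝ (fderiv ℝ fun x => ‖φ x‖ ^ 2) a v v +
      fderiv ℝ (fderiv ℝ fun x => ‖φ x‖ ^ 2) a (I • v) (I • v) =
      4 * ‖fderiv ℂ φ a v‖ ^ 2 := by
  set g : ℂ → ℂ := fun ζ => φ (a + ζ • v)
  have hline : HasDerivAt (fun ζ : ℂ => a + ζ • v) v 0 := by
    simpa using ((hasDerivAt_id (0 : ℂ)).smul_const v).const_add a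
  have hφ' : AnalyticAt ℂ φ (a + (0 : ℂ) • v) := by simpa using hφ
  have hg : AnalyticAt ℂ g 0 := hφ'.comp (f := fun ζ : ℂ => a + ζ • v) (by fun_prop)
  have hg' : deriv g 0 = fderiv ℂ φ a v := by
    have h := (hφ'.differentiableAt.hasFDerivAt.comp_hasDerivAt 0 hline).deriv
    rw [zero_smul, add_zero] at h
    exact h
  have hrestrict (ε : ℂ) :
      (fun t : ℝ => ‖φ (a + t • ε • v)‖ ^ 2) = fun t : ℝ => ‖g (t * ε)‖ ^ 2 := by
    funext t
    simp only [g, smul_smul, ← Complex.coe_smul]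
  have hrestrict_one := hrestrict 1
  rw [one_smul] at hrestrict_one
  rw [fderiv_fderiv_apply_eq_deriv_deriv hφ.contDiffAt_norm_sq,
    fderiv_fderiv_apply_eq_deriv_deriv hφ.contDiffAt_norm_sq, hrestrict_one, hrestrict,
    deriv_deriv_norm_sq_comp_ofReal_mul hg, deriv_deriv_norm_sq_comp_ofReal_mul hg, hg']
  simp only [mul_one, mul_assoc, I_mul_I, mul_neg, inner_neg_right, norm_mul, norm_I]
  ring

theorem fderiv_fderiv_sum_norm_sq_add_apply_I_smul {ι : Type*} [Fintype ι] {φ : ι → E → ℂ}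
    {a : E} (hφ : ∀ i, AnalyticAt ℂ (φ i) a) (v : E) :
    fderiv ℝ (fderiv ℝ fun x => ∑ i, ‖φ i x‖ ^ 2) a v v +
      fderiv ℝ (fderiv ℝ fun x => ∑ i, ‖φ i x‖ ^ 2) a (I • v) (I • v) =
      4 * ∑ i, ‖fderiv ℂ (φ i) a v‖ ^ 2 := by
  rw [fderiv_fderiv_sum _ fun i _ => (hφ i).contDiffAt_norm_sq]
  simp only [sum_apply, ← Finset.sum_add_distrib, Finset.mul_sum,
    fderiv_fderiv_norm_sq_add_apply_I_smul (hφ _)]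

end Holomorphic

section CoordOrInvEval

open MvPolynomial

variable {m : ℕ}

noncomputable def coordOrInvEval (Δ : MvPolynomial (Fin m) ℂ) : Option (Fin m) → (Fin m → ℂ) → ℂ
  | none, z => (eval z Δ)⁻¹
  | some j, z => z j

noncomputable def prodCoordOrInvEval (Δ : MvPolynomial (Fin m) ℂ) :
    Option (Fin m) ⊕ Option (Fin m) → (Fin m → ℂ) × (Fin m → ℂ) → ℂ :=
  Sum.elim (fun o x => coordOrInvEval Δ o x.1) (fun o x => coordOrInvEval Δ o x.2)

theorem sum_norm_sq_coordOrInvEval (Δ : MvPolynomial (Fin m) ℂ) (z : Fin m → ℂ) :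
    ∑ o, ‖coordOrInvEval Δ o z‖ ^ 2 = ∑ j, ‖z j‖ ^ 2 + 1 / ‖eval z Δ‖ ^ 2 := by
  simp [Fintype.sum_option, coordOrInvEval, add_comm]

theorem analyticAt_coordOrInvEval {Δ : MvPolynomial (Fin m) ℂ} {z : Fin m → ℂ}
    (hz : eval z Δ ≠ 0) (o : Option (Fin m)) : AnalyticAt ℂ (coordOrInvEval Δ o) z := by
  cases o with
  | none => exact (AnalyticOnNhd.eval_mvPolynomial Δ z trivial).inv hz
  | some j => exact (ContinuousLinearMap.proj (R := ℂ) (φ := fun _ : Fin m => ℂ) j).analyticAt z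

theorem analyticAt_prodCoordOrInvEval {Δ : MvPolynomial (Fin m) ℂ} {p p' : Fin m → ℂ}
    (hp : eval p Δ ≠ 0) (hp' : eval p' Δ ≠ 0) (i : Option (Fin m) ⊕ Option (Fin m)) :
    AnalyticAt ℂ (prodCoordOrInvEval Δ i) (p, p') := by
  cases i with
  | inl o => exact ((analyticAt_coordOrInvEval hp o).comp analyticAt_fst :
      AnalyticAt ℂ (coordOrInvEval Δ o ∘ Prod.fst) (p, p'))
  | inr o => exact ((analyticAt_coordOrInvEval hp' o).comp analyticAt_snd :
      AnalyticAt ℂ (coordOrInvEval Δ o ∘ Prod.snd) (p, p'))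

theorem sum_norm_sq_fderiv_prodCoordOrInvEval_pos (Δ : MvPolynomial (Fin m) ℂ)
    (a : (Fin m → ℂ) × (Fin m → ℂ)) {v : (Fin m → ℂ) × (Fin m → ℂ)} (hv : v ≠ 0) :
    0 < ∑ i, ‖fderiv ℂ (prodCoordOrInvEval Δ i) a v‖ ^ 2 := by
  have hfst (j : Fin m) : fderiv ℂ (prodCoordOrInvEval Δ (.inl (some j))) a v = v.1 j :=
    congrArg (· v) ((ContinuousLinearMap.proj j).comp (ContinuousLinearMap.fst ℂ _ _)).fderiv
  have hsnd (j : Fin m) : fderiv ℂ (prodCoordOrInvEval Δ (.inr (some j))) a v = v.2 j :=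
    congrArg (· v) ((ContinuousLinearMap.proj j).comp (ContinuousLinearMap.snd ℂ _ _)).fderiv
  refine Finset.sum_pos' (fun i _ => by positivity) ?_
  rcases not_and_or.1 (mt Prod.ext_iff.2 hv) with hv₁ | hv₂
  · obtain ⟨j, hj⟩ := Function.ne_iff.1 hv₁
    exact ⟨.inl (some j), Finset.mem_univ _, by rw [hfst]; positivity⟩
  · obtain ⟨j, hj⟩ := Function.ne_iff.1 hv₂
    exact ⟨.inr (some j), Finset.mem_univ _, by rw [hsnd]; positivity⟩

end CoordOrInvEval

theorem hessian_f_tilde_positivity_index_ge_general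
    (m : ℕ) (Δ : MvPolynomial (Fin m) ℂ)
    (g : (Fin m → ℂ) → ℝ)
    (hg : ∀ z, g z = (∑ j, ‖z j‖ ^ 2) + 1 / ‖MvPolynomial.eval z Δ‖ ^ 2)
    (f : (Fin m → ℂ) × (Fin m → ℂ) → ℝ)
    (hf : ∀ pq, f pq = g pq.1 + g pq.2)
    (p p' : Fin m → ℂ) (hp : MvPolynomial.eval p Δ ≠ 0) (hp' : MvPolynomial.eval p' Δ ≠ 0) :
    ∃ W : Submodule ℝ ((Fin m → ℂ) × (Fin m → ℂ)), 2 * m ≤ Module.finrank ℝ W ∧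
      ∀ v ∈ W, v ≠ 0 → 0 < (fderiv ℝ (fderiv ℝ f) (p, p') v) v := by
  have hφ := analyticAt_prodCoordOrInvEval hp hp'
  obtain rfl : f = fun x => ∑ i, ‖prodCoordOrInvEval Δ i x‖ ^ 2 := by
    funext x
    simp only [hf, hg, Fintype.sum_sum_type, prodCoordOrInvEval, Sum.elim_inl, Sum.elim_inr,
      sum_norm_sq_coordOrInvEval]
  set H := fderiv ℝ (fderiv ℝ fun x => ∑ i, ‖prodCoordOrInvEval Δ i x‖ ^ 2) (p, p')
  have hsymm : H.toBilinForm.IsSymm :=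
    ⟨(ContDiffAt.sum fun i _ => (hφ i).contDiffAt_norm_sq (n := 2)).isSymmSndFDerivAt (by simp)⟩
  have hI : ∀ v ≠ 0, 0 < H v v + H (I • v) (I • v) := fun v hv => by
    rw [fderiv_fderiv_sum_norm_sq_add_apply_I_smul hφ]
    exact mul_pos four_pos (sum_norm_sq_fderiv_prodCoordOrInvEval_pos Δ _ hv)
  obtain ⟨W, hW, hrank⟩ := H.toBilinForm.exists_isPosDefOn_finrank_le_two_mul hsymm
    ((LinearEquiv.smulOfUnit (Units.mk0 I I_ne_zero)).restrictScalars ℝ) hI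
  refine ⟨W, ?_, hW⟩
  simp only [finrank_prod, finrank_pi_fintype, finrank_real_complex, Finset.sum_const,
    Finset.card_univ, Fintype.card_fin, smul_eq_mul] at hrank
  omega

/-- For every point `(p, p')` of `V × V`, the positivity index of the Euclidean Hessian of
`f̃(p, p') = g(p) + g(p')` at `(p, p')` is at least `2m`: there is a real subspace of
dimension at least `2m` on which the quadratic form is positive definite. -/
theorem hessian_f_tilde_positivity_index_ge
    (m : ℕ) (hm : 1 ≤ m) (Δ : MvPolynomial (Fin m) ℂ) (hΔ : Δ ≠ 0)
    (g : (Fin m → ℂ) → ℝ)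
    (hg : ∀ z, g z = (∑ j, ‖z j‖ ^ 2) + 1 / ‖MvPolynomial.eval z Δ‖ ^ 2)
    (f : (Fin m → ℂ) × (Fin m → ℂ) → ℝ)
    (hf : ∀ pq, f pq = g pq.1 + g pq.2)
    (p p' : Fin m → ℂ) (hp : MvPolynomial.eval p Δ ≠ 0) (hp' : MvPolynomial.eval p' Δ ≠ 0) :
    ∃ W : Submodule ℝ ((Fin m → ℂ) × (Fin m → ℂ)), 2 * m ≤ Module.finrank ℝ W ∧
      ∀ v ∈ W, v ≠ 0 → 0 < (fderiv ℝ (fderiv ℝ f) (p, p') v) v :=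
  hessian_f_tilde_positivity_index_ge_general m Δ g hg f hf p p' hp hp'
end

section
/- Let n ≥ 2 and let D be a polynomial in the n−1 complex variables z_2, …, z_n such that for every (w_1, …, w_n) ∈ ℂ^n with w_1 + … + w_n = 0 one has D(e_2(w), …, e_n(w)) = ∏_{1≤i<j≤n}(w_i − w_j)², where e_i denotes the i-th elementary symmetric polynomial. Let V^C = {z ∈ ℂ^{n−1} : D(z) ≠ 0}. Then the map F_n^0 → V^C sending w = (w_1, …, w_n) to (e_2(w), …, e_n(w)) is invariant under the permutation action of the symmetric group 𝔖_n on F_n^0 and descends to a homeomorphism from the quotient space C_n^0 = F_n^0/𝔖_n (with the quotient topology) onto V^C. -/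
/-!
Up to sign, `(e_2(w), …, e_n(w))` are the coefficients of `∏ (X - w_j)` below the leading one,
since `e_1` vanishes on `F_n^0`. So by Vieta the fibres of `w ↦ (e_2(w), …, e_n(w))` on `F_n^0` are
exactly the `𝔖_n`-orbits, and over `ℂ` every vector is attained. Cauchy's bound on the roots makes
the map proper, so the induced continuous bijection from the quotient is closed, hence a
homeomorphism. The hypothesis on `D` identifies `V^C` with the image of the configurations with
distinct points.
-/

open Finset Polynomial NNReal Function

theorem Multiset.esymm_one {R : Type*} [CommSemiring R] (s : Multiset R) : s.esymm 1 = s.sum := by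
  simp [Multiset.esymm, Multiset.powersetCard_one, Multiset.map_map]

theorem Multiset.eq_of_card_eq_of_esymm_eq {R : Type*} [CommRing R] [IsDomain R]
    {s t : Multiset R} (hcard : card s = card t)
    (hesymm : ∀ k, 1 ≤ k → k ≤ card s → s.esymm k = t.esymm k) : s = t := by
  have hprod : (s.map fun a => X - C a).prod = (t.map fun a => X - C a).prod := by
    rw [prod_X_sub_X_eq_sum_esymm, prod_X_sub_X_eq_sum_esymm, ← hcard]
    refine Finset.sum_congr rfl fun k hk => ?_
    rcases Nat.eq_zero_or_pos k with rfl | hk0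
    · simp [Multiset.esymm]
    · rw [hesymm k hk0 (Nat.lt_succ_iff.1 (Finset.mem_range.1 hk))]
  simpa using congrArg Polynomial.roots hprod

theorem Multiset.exists_fin_map_univ_eq {α : Type*} {s : Multiset α} {n : ℕ} (hs : card s = n) :
    ∃ w : Fin n → α, univ.val.map w = s := by
  classical
  let e : s ≃ Fin n := Fintype.equivFinOfCardEq ((card_coe s).trans hs)
  refine ⟨(fun x : s => (x : α)) ∘ e.symm, ?_⟩
  rw [← Multiset.map_map, map_univ_val_equiv, map_univ_coe]

theorem Multiset.exists_card_eq_esymm_eq {K : Type*} [Field K] [IsAlgClosed K] (n : ℕ)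
    (c : ℕ → K) : ∃ s : Multiset K, card s = n ∧ ∀ k, 1 ≤ k → k ≤ n → s.esymm k = c k := by
  set q : K[X] := ∑ i ∈ Finset.range n, C ((-1) ^ (n - i) * c (n - i)) * X ^ i
  have hq : q.degree < n := by
    simpa only [Fin.sum_univ_eq_sum_range (fun i => C ((-1) ^ (n - i) * c (n - i)) * X ^ i)]
      using degree_sum_fin_lt fun i : Fin n => (-1) ^ (n - i) * c (n - i)
  set p : K[X] := X ^ n + q
  have hdeg : p.natDegree = n := by
    rw [natDegree_add_eq_left_of_degree_lt (by rwa [degree_X_pow]), natDegree_X_pow]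
  have hcard : card p.roots = p.natDegree :=
    (IsAlgClosed.splits p).natDegree_eq_card_roots.symm
  refine ⟨p.roots, hcard.trans hdeg, fun k hk1 hkn => ?_⟩
  have hcoeff := coeff_eq_esymm_roots_of_card hcard (k := n - k) (by omega)
  have hq_coeff : p.coeff (n - k) = (-1) ^ k * c k := by
    simp only [p, q, coeff_add, coeff_X_pow, finsetSum_coeff, coeff_C_mul_X_pow,
      Finset.sum_ite_eq, Finset.mem_range]
    rw [if_neg (by omega), if_pos (by omega), zero_add, Nat.sub_sub_self hkn]
  rw [(monic_X_pow_add hq).leadingCoeff, hdeg, Nat.sub_sub_self hkn, hq_coeff, one_mul] at hcoeff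
  exact (mul_left_cancel₀ (pow_ne_zero k (neg_ne_zero.2 one_ne_zero)) hcoeff).symm

theorem Multiset.nnnorm_lt_of_mem_of_esymm_le {K : Type*} [NormedField K] {s : Multiset K}
    {B : ℝ≥0} (hB : ∀ k, 1 ≤ k → k ≤ card s → ‖s.esymm k‖₊ ≤ B) {a : K} (ha : a ∈ s) :
    ‖a‖₊ < B + 1 := by
  set p : K[X] := (s.map fun a => X - C a).prod
  have hmonic : p.Monic :=
    monic_multiset_prod_of_monic _ _ fun a _ => monic_X_sub_C a
  have hdeg : p.natDegree = card s := natDegree_multiset_prod_X_sub_C_eq_card s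
  have hroot : p.IsRoot a := (mem_roots hmonic.ne_zero).1 (by rwa [roots_multiset_prod_X_sub_C])
  refine (hroot.norm_lt_cauchyBound hmonic.ne_zero).trans_le ?_
  rw [cauchyBound, hmonic.leadingCoeff, nnnorm_one, div_one, hdeg]
  gcongr
  refine Finset.sup_le fun k hk => ?_
  have hk : k < card s := Finset.mem_range.1 hk
  rw [prod_X_sub_C_coeff s hk.le, nnnorm_mul, nnnorm_pow, nnnorm_neg, nnnorm_one, one_pow,
    one_mul]
  exact hB _ (by omega) (by omega)

theorem Fintype.exists_perm_comp_eq_of_map_univ_eq {ι α : Type*} [Fintype ι] {v w : ι → α}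
    (hv : Injective v) (hw : Injective w) (h : univ.val.map v = univ.val.map w) :
    ∃ σ : Equiv.Perm ι, v ∘ σ = w := by
  have hrange : Set.range w = Set.range v := by
    ext x
    simpa using congrArg (x ∈ ·) h.symm
  refine ⟨(Equiv.ofInjective w hw).trans ((Equiv.setCongr hrange).trans
    (Equiv.ofInjective v hv).symm), funext fun i => ?_⟩
  exact Equiv.apply_ofInjective_symm hv _

theorem Finset.prod_sq_sub_ne_zero_iff_injective {ι R : Type*} [Fintype ι] [LinearOrder ι]
    [CommRing R] [IsDomain R] (w : ι → R) :
    ∏ p ∈ univ.filter (fun p : ι × ι => p.1 < p.2), (w p.1 - w p.2) ^ 2 ≠ 0 ↔ Injective w := by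
  rw [prod_ne_zero_iff, injective_iff_pairwise_ne, pairwise_iff_lt]
  simp [sub_eq_zero]

theorem IsProperMap.exists_homeomorph_quot {X Y : Type*} [TopologicalSpace X]
    [TopologicalSpace Y] {r : X → X → Prop} {f : X → Y} (hf : IsProperMap f) (hsurj : Surjective f)
    (hr : ∀ x y, r x y ↔ f x = f y) :
    ∃ e : Quot r ≃ₜ Y, ∀ x, e (Quot.mk r x) = f x := by
  let g : Quot r → Y := Quot.lift f fun x y h => (hr x y).1 h
  have hinj : Injective g := fun a b =>
    Quot.induction_on₂ a b fun x y h => Quot.sound ((hr x y).2 h)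
  have hclosed : IsClosedMap g :=
    .of_comp_surjective Quot.mk_surjective continuous_quot_mk hf.isClosedMap
  let e : Quot r ≃ Y := .ofBijective g ⟨hinj, .of_comp (g := Quot.mk r) hsurj⟩
  exact ⟨e.toHomeomorphOfContinuousClosed (continuous_quot_lift _ hf.continuous) hclosed,
    fun _ => rfl⟩

section EsymmTail

variable {R : Type*} [CommRing R] {n : ℕ}

/-- `(e_2(w), …, e_n(w))`, the index `i` standing for `e_{i+2}`. -/
def esymmTail (w : Fin n → R) : Fin (n - 1) → R := fun i => (univ.val.map w).esymm (i + 2)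

theorem esymmTail_comp_perm (w : Fin n → R) (σ : Equiv.Perm (Fin n)) :
    esymmTail (w ∘ σ) = esymmTail w := by
  ext i
  simp only [esymmTail, ← Multiset.map_map, Multiset.map_univ_val_equiv]

theorem continuous_esymmTail [TopologicalSpace R] [IsTopologicalRing R] :
    Continuous (esymmTail : (Fin n → R) → Fin (n - 1) → R) := by
  refine continuous_pi fun i => ?_
  simp only [esymmTail, Finset.esymm_map_val]
  fun_prop

theorem map_univ_eq_of_esymmTail_eq [IsDomain R] {v w : Fin n → R} (hv : ∑ j, v j = 0)
    (hw : ∑ j, w j = 0) (h : esymmTail v = esymmTail w) : univ.val.map v = univ.val.map w := by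
  refine Multiset.eq_of_card_eq_of_esymm_eq (by simp) fun k hk1 hkn => ?_
  simp only [Multiset.card_map, card_val, card_univ, Fintype.card_fin] at hkn
  rcases hk1.eq_or_lt with rfl | hk2
  · rw [Multiset.esymm_one, Multiset.esymm_one]
    exact hv.trans hw.symm
  · simpa [esymmTail, Nat.sub_add_cancel hk2] using congrFun h ⟨k - 2, by omega⟩

theorem exists_sum_eq_zero_esymmTail_eq {K : Type*} [Field K] [IsAlgClosed K]
    (z : Fin (n - 1) → K) : ∃ w : Fin n → K, ∑ j, w j = 0 ∧ esymmTail w = z := by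
  rcases Nat.eq_zero_or_pos n with rfl | hn
  · exact ⟨0, by simp, funext fun i => i.elim0⟩
  obtain ⟨s, hcard, hs⟩ := Multiset.exists_card_eq_esymm_eq n
    fun k => if h : 2 ≤ k ∧ k ≤ n then z ⟨k - 2, by omega⟩ else 0
  obtain ⟨w, rfl⟩ := Multiset.exists_fin_map_univ_eq hcard
  refine ⟨w, ?_, funext fun i => ?_⟩
  · have h1 := hs 1 le_rfl hn
    rwa [Multiset.esymm_one, dif_neg (by omega)] at h1
  · rw [esymmTail, hs _ (by omega) (by omega), dif_pos (by omega)]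
    simp

theorem isCompact_setOf_sum_eq_zero_esymmTail_mem {K : Type*} [NormedField K] [ProperSpace K]
    {T : Set (Fin (n - 1) → K)} (hT : IsCompact T) :
    IsCompact {w : Fin n → K | ∑ j, w j = 0 ∧ esymmTail w ∈ T} := by
  have hclosed : IsClosed {w : Fin n → K | ∑ j, w j = 0 ∧ esymmTail w ∈ T} :=
    (isClosed_eq (by fun_prop) continuous_const).inter
      (hT.isClosed.preimage continuous_esymmTail)
  refine Metric.isCompact_of_isClosed_isBounded hclosed ?_
  obtain ⟨B, hB⟩ := isBounded_iff_forall_norm_le.1 hT.isBounded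
  refine (Metric.isBounded_closedBall (x := 0) (r := ((B.toNNReal + 1 : ℝ≥0) : ℝ))).subset
    fun w ⟨hsum, hw⟩ => ?_
  rw [mem_closedBall_zero_iff, ← coe_nnnorm, NNReal.coe_le_coe, pi_nnnorm_le_iff]
  refine fun j => (Multiset.nnnorm_lt_of_mem_of_esymm_le (fun k hk1 hkn => ?_)
    (Multiset.mem_map_of_mem w (mem_univ_val j))).le
  simp only [Multiset.card_map, card_val, card_univ, Fintype.card_fin] at hkn
  rcases hk1.eq_or_lt with rfl | hk2
  · rw [Multiset.esymm_one, ← Finset.sum_eq_multiset_sum, hsum, nnnorm_zero]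
    exact zero_le
  · have hle : ‖esymmTail w ⟨k - 2, by omega⟩‖ ≤ B := (norm_le_pi_norm _ _).trans (hB _ hw)
    rw [esymmTail, Nat.sub_add_cancel hk2] at hle
    rw [← norm_toNNReal]
    exact Real.toNNReal_le_toNNReal hle

end EsymmTail

/-- `F_n^0`. -/
abbrev CenteredConfig (n : ℕ) := {w : Fin n → ℂ // Injective w ∧ ∑ j, w j = 0}

section Restrict

variable {n : ℕ} {V : Set (Fin (n - 1) → ℂ)}
  (hV : ∀ w : Fin n → ℂ, ∑ j, w j = 0 → (esymmTail w ∈ V ↔ Injective w))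

def esymmTailRestrict : CenteredConfig n → V := fun w => ⟨esymmTail w.1, (hV w.1 w.2.2).2 w.2.1⟩

theorem isProperMap_esymmTailRestrict : IsProperMap (esymmTailRestrict hV) := by
  refine isProperMap_iff_isCompact_preimage.2
    ⟨(continuous_esymmTail.comp continuous_subtype_val).subtype_mk _, fun T hT => ?_⟩
  have hpreimage : esymmTailRestrict hV ⁻¹' T =
      Subtype.val ⁻¹' {w | ∑ j, w j = 0 ∧ esymmTail w ∈ Subtype.val '' T} := by
    ext w
    simp [esymmTailRestrict, w.2.2, (hV w.1 w.2.2).2 w.2.1]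
  rw [hpreimage, Topology.IsEmbedding.subtypeVal.isInducing.isCompact_preimage_iff]
  · exact isCompact_setOf_sum_eq_zero_esymmTail_mem (hT.image continuous_subtype_val)
  · rintro w ⟨hw, z, -, hzw⟩
    exact ⟨⟨w, (hV w hw).1 (hzw ▸ z.2), hw⟩, rfl⟩

theorem surjective_esymmTailRestrict : Surjective (esymmTailRestrict hV) := by
  rintro ⟨z, hz⟩
  obtain ⟨w, hw, rfl⟩ := exists_sum_eq_zero_esymmTail_eq z
  exact ⟨⟨w, (hV w hw).1 hz, hw⟩, rfl⟩

theorem esymmTailRestrict_eq_iff (v w : CenteredConfig n) :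
    (∃ σ : Equiv.Perm (Fin n), v.1 ∘ σ = w.1) ↔
      esymmTailRestrict hV v = esymmTailRestrict hV w := by
  rw [esymmTailRestrict, esymmTailRestrict, Subtype.mk.injEq]
  refine ⟨fun ⟨σ, hσ⟩ => hσ ▸ (esymmTail_comp_perm v.1 σ).symm, fun h => ?_⟩
  exact Fintype.exists_perm_comp_eq_of_map_univ_eq v.2.1 w.2.1
    (map_univ_eq_of_esymmTail_eq v.2.2 w.2.2 h)

end Restrict

theorem Cn0_homeomorphic_to_VC_general
    (n : ℕ)
    (E : (Fin n → ℂ) → ℕ → ℂ)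
    (hE : ∀ (w : Fin n → ℂ) (k : ℕ),
        E w k = ∑ t ∈ Finset.powersetCard k (Finset.univ : Finset (Fin n)), ∏ j ∈ t, w j)
    (D : MvPolynomial (Fin (n - 1)) ℂ)
    (hD : ∀ w : Fin n → ℂ, ∑ j, w j = 0 →
        MvPolynomial.eval (fun i : Fin (n - 1) => E w ((i : ℕ) + 2)) D =
          ∏ p ∈ Finset.univ.filter (fun p : Fin n × Fin n => p.1 < p.2),
            (w p.1 - w p.2) ^ 2) :
    (∀ (σ : Equiv.Perm (Fin n)) (w : Fin n → ℂ), Function.Injective w → ∑ j, w j = 0 →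
        (fun i : Fin (n - 1) => E (w ∘ σ) ((i : ℕ) + 2)) =
          fun i : Fin (n - 1) => E w ((i : ℕ) + 2)) ∧
    ∃ e : Quot (fun w w' : {w : Fin n → ℂ // Function.Injective w ∧ ∑ j, w j = 0} =>
            ∃ σ : Equiv.Perm (Fin n), w.1 ∘ σ = w'.1) ≃ₜ
          {z : Fin (n - 1) → ℂ // MvPolynomial.eval z D ≠ 0},
      ∀ w : {w : Fin n → ℂ // Function.Injective w ∧ ∑ j, w j = 0},
        (e (Quot.mk _ w) : Fin (n - 1) → ℂ) = fun i : Fin (n - 1) => E w.1 ((i : ℕ) + 2) := by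
  obtain rfl : E = fun w k => (univ.val.map w).esymm k :=
    funext₂ fun w k => by rw [hE, Finset.esymm_map_val]
  have hV (w : Fin n → ℂ) (hw : ∑ j, w j = 0) :
      esymmTail w ∈ {z | MvPolynomial.eval z D ≠ 0} ↔ Injective w := by
    rw [← prod_sq_sub_ne_zero_iff_injective, ← hD w hw]
    rfl
  refine ⟨fun σ w _ _ => esymmTail_comp_perm w σ, ?_⟩
  obtain ⟨e, he⟩ := (isProperMap_esymmTailRestrict hV).exists_homeomorph_quot
    (surjective_esymmTailRestrict hV) (esymmTailRestrict_eq_iff hV)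
  exact ⟨e, fun w => congrArg Subtype.val (he w)⟩

/-- The map `F_n^0 → V^C` sending `w` to `(e_2(w), …, e_n(w))` is invariant under the
permutation action of the symmetric group on `F_n^0` and descends to a homeomorphism from the
quotient `C_n^0 = F_n^0/𝔖_n` (with the quotient topology) onto
`V^C = {z ∈ ℂ^{n−1} : D(z) ≠ 0}`. -/
theorem Cn0_homeomorphic_to_VC
    (n : ℕ) (hn : 2 ≤ n)
    (E : (Fin n → ℂ) → ℕ → ℂ)
    (hE : ∀ (w : Fin n → ℂ) (k : ℕ),
        E w k = ∑ t ∈ Finset.powersetCard k (Finset.univ : Finset (Fin n)), ∏ j ∈ t, w j)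
    (D : MvPolynomial (Fin (n - 1)) ℂ)
    (hD : ∀ w : Fin n → ℂ, ∑ j, w j = 0 →
        MvPolynomial.eval (fun i : Fin (n - 1) => E w ((i : ℕ) + 2)) D =
          ∏ p ∈ Finset.univ.filter (fun p : Fin n × Fin n => p.1 < p.2),
            (w p.1 - w p.2) ^ 2) :
    (∀ (σ : Equiv.Perm (Fin n)) (w : Fin n → ℂ), Function.Injective w → ∑ j, w j = 0 →
        (fun i : Fin (n - 1) => E (w ∘ σ) ((i : ℕ) + 2)) =
          fun i : Fin (n - 1) => E w ((i : ℕ) + 2)) ∧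
    ∃ e : Quot (fun w w' : {w : Fin n → ℂ // Function.Injective w ∧ ∑ j, w j = 0} =>
            ∃ σ : Equiv.Perm (Fin n), w.1 ∘ σ = w'.1) ≃ₜ
          {z : Fin (n - 1) → ℂ // MvPolynomial.eval z D ≠ 0},
      ∀ w : {w : Fin n → ℂ // Function.Injective w ∧ ∑ j, w j = 0},
        (e (Quot.mk _ w) : Fin (n - 1) → ℂ) = fun i : Fin (n - 1) => E w.1 ((i : ℕ) + 2) :=
  Cn0_homeomorphic_to_VC_general n E hE D hD
end
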